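/- arXiv:2604.24998 — 8 statements merged into one kernel-verified Lean document; each statement's English description precedes it below -/
import Mathlib

section
/- Let p(t) be a nonnegative classical solution of the L = 2 mean-field system with β = 0 and λ > 0, with conserved density of empty houses (2 p_{0,0}(t) + p_{0,1}(t) + p_{1,0}(t))/2 = 1 - ρ₊ - ρ₋ for all t ≥ 0, where ρ₊ + ρ₋ < 1. Then p_{1,1}(t) ≤ p_{1,1}(0) · exp(-(1 - ρ₊ - ρ₋) λ t) for all t ≥ 0. -/
open Real

theorem le_mul_exp_of_hasDerivAt_le_mul {f f' : ℝ → ℝ} {K : ℝ}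
    (hf : ∀ t ≥ (0:ℝ), HasDerivAt f (f' t) t) (bound : ∀ t ≥ (0:ℝ), f' t ≤ K * f t) :
    ∀ t ≥ (0:ℝ), f t ≤ f 0 * exp (K * t) := by
  intro t ht
  have hgronwall := le_gronwallBound_of_liminf_deriv_right_le (f := f) (f' := f') (ε := 0)
    (a := 0) (b := t) (δ := f 0)
    (fun s hs => (hf s hs.1).continuousAt.continuousWithinAt)
    (fun s hs _ hr => (hf s hs.1).hasDerivWithinAt.liminf_right_slope_le hr)
    le_rfl (fun s hs => by simpa using bound s hs.1) t ⟨ht, le_rfl⟩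
  simpa [gronwallBound_ε0] using hgronwall

theorem stmt_1_general
    (lam ρp ρm : ℝ) (hlam : 0 < lam)
    (p00 p10 p01 p20 p02 p11 : ℝ → ℝ)
    (hnn : ∀ t ≥ (0:ℝ), 0 ≤ p00 t ∧ 0 ≤ p10 t ∧ 0 ≤ p01 t ∧ 0 ≤ p20 t ∧ 0 ≤ p02 t ∧ 0 ≤ p11 t)
    (h11 : ∀ t ≥ (0:ℝ), HasDerivAt p11
      (-lam*(2*p00 t + (p10 t + p01 t)/2)*(p11 t)) t)
    (hcons : ∀ t ≥ (0:ℝ), (2*p00 t + p01 t + p10 t)/2 = 1 - ρp - ρm) :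
    ∀ t ≥ (0:ℝ), p11 t ≤ p11 0 * Real.exp (-(1 - ρp - ρm) * lam * t) := by
  refine le_mul_exp_of_hasDerivAt_le_mul h11 fun t ht => ?_
  obtain ⟨hp00, -, -, -, -, hp11⟩ := hnn t ht
  have hrate : 2*p00 t + (p10 t + p01 t)/2 = (1 - ρp - ρm) + p00 t := by
    linarith [hcons t ht]
  have hloss : 0 ≤ lam * p00 t * p11 t := by positivity
  calc -lam*(2*p00 t + (p10 t + p01 t)/2)*(p11 t)
      = -(1 - ρp - ρm) * lam * p11 t - lam * p00 t * p11 t := by rw [hrate]; ring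
    _ ≤ -(1 - ρp - ρm) * lam * p11 t := by linarith

/-- For the L = 2 system with β = 0 and λ > 0, the mixed-neighborhood fraction
p₁₁ decays exponentially: local segregation. -/
theorem stmt_1
    (lam ρp ρm : ℝ) (hlam : 0 < lam) (hρ : ρp + ρm < 1)
    (p00 p10 p01 p20 p02 p11 : ℝ → ℝ)
    (hnn : ∀ t ≥ (0:ℝ), 0 ≤ p00 t ∧ 0 ≤ p10 t ∧ 0 ≤ p01 t ∧ 0 ≤ p20 t ∧ 0 ≤ p02 t ∧ 0 ≤ p11 t)
    (h00 : ∀ t ≥ (0:ℝ), HasDerivAt p00 (-2*lam*(p00 t)*(p11 t)) t)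
    (h10 : ∀ t ≥ (0:ℝ), HasDerivAt p10 (lam*(2*p00 t + (p01 t - p10 t)/2)*(p11 t)) t)
    (h01 : ∀ t ≥ (0:ℝ), HasDerivAt p01 (lam*(2*p00 t + (p10 t - p01 t)/2)*(p11 t)) t)
    (h20 : ∀ t ≥ (0:ℝ), HasDerivAt p20 ((lam/2)*(p10 t)*(p11 t)) t)
    (h02 : ∀ t ≥ (0:ℝ), HasDerivAt p02 ((lam/2)*(p01 t)*(p11 t)) t)
    (h11 : ∀ t ≥ (0:ℝ), HasDerivAt p11
      (-lam*(2*p00 t + (p10 t + p01 t)/2)*(p11 t)) t)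
    (hcons : ∀ t ≥ (0:ℝ), (2*p00 t + p01 t + p10 t)/2 = 1 - ρp - ρm) :
    ∀ t ≥ (0:ℝ), p11 t ≤ p11 0 * Real.exp (-(1 - ρp - ρm) * lam * t) :=
  stmt_1_general lam ρp ρm hlam p00 p10 p01 p20 p02 p11 hnn h11 hcons
end

section
/- Let β > 0 and let p(t) be a strictly positive solution of the L = 2 mean-field system with λ = 0, and let p* be the trinomial equilibrium. Then the relative entropy H(t) = Σ_{(b,r)} p_{b,r}(t) ln(p_{b,r}(t)/p*_{b,r}) satisfies (1/β) H'(t) = -2(p_{0,0}p_{2,0} - p_{1,0}²/4) ln(4p_{0,0}p_{2,0}/p_{1,0}²) - 2(p_{0,0}p_{0,2} - p_{0,1}²/4) ln(4p_{0,0}p_{0,2}/p_{0,1}²) - 2(p_{0,0}p_{1,1} - p_{0,1}p_{1,0}/2) ln(2p_{0,0}p_{1,1}/(p_{0,1}p_{1,0})) - (p_{0,1}p_{2,0} - p_{1,0}p_{1,1}/2) ln(2p_{0,1}p_{2,0}/(p_{1,0}p_{1,1})) - (p_{1,0}p_{0,2} - p_{0,1}p_{1,1}/2) ln(2p_{1,0}p_{0,2}/(p_{0,1}p_{1,1})),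 and in particular H'(t) ≤ 0 for all t. -/
/-! The system is the mass-action kinetics of five reversible reactions between pair types,
`2·(1,0) ⇌ (0,0) + (2,0)`, `2·(0,1) ⇌ (0,0) + (0,2)`, `(1,0) + (0,1) ⇌ (0,0) + (1,1)`,
`(1,0) + (1,1) ⇌ (0,1) + (2,0)` and `(0,1) + (1,1) ⇌ (1,0) + (0,2)`.
The trinomial law `p*` is a product measure, so it satisfies detailed balance for each of them
(e.g. `p*₁₀² = 4 p*₀₀ p*₂₀`). Hence, writing `ℓ = log (p / p*)`, each log-ratio in the
dissipation is the stoichiometric combination of the `ℓ`'s, and `H' = ∑ ṗ (ℓ + 1)` regroups,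
reaction by reaction, into terms `-(X - Y) log (X / Y)`, the `+ 1` contributions cancelling by
conservation of mass. Each such term is `≤ 0` because `log` is increasing. -/

open Real

lemma hasDerivAt_mul_log_div_const {p : ℝ → ℝ} {d q t : ℝ} (hp : HasDerivAt p d t)
    (hpt : p t ≠ 0) (hq : q ≠ 0) :
    HasDerivAt (fun s => p s * log (p s / q)) (d * (log (p t / q) + 1)) t := by
  refine (hp.mul ((hp.div_const q).log (div_ne_zero hpt hq))).congr_deriv ?_
  field_simp

lemma sub_mul_log_div_nonneg {X Y : ℝ} (hX : 0 < X) (hY : 0 < Y) :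
    0 ≤ (X - Y) * log (X / Y) := by
  rcases le_total Y X with h | h
  · exact mul_nonneg (sub_nonneg.2 h) (log_nonneg ((one_le_div hY).2 h))
  · exact mul_nonneg_of_nonpos_of_nonpos (sub_nonpos.2 h)
      (log_nonpos (div_pos hX hY).le ((div_le_one hY).2 h))

lemma sub_div_mul_log_mul_div_nonneg {c X Y : ℝ} (hc : 0 < c) (hX : 0 < X) (hY : 0 < Y) :
    0 ≤ (X - Y / c) * log (c * X / Y) := by
  have h := sub_mul_log_div_nonneg hX (div_pos hY hc)
  rwa [div_div_eq_mul_div, mul_comm X c] at h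

lemma log_mul_mul_div_mul_eq_of_balance {k a b c d qa qb qc qd : ℝ}
    (ha : 0 < a) (hb : 0 < b) (hc : 0 < c) (hd : 0 < d)
    (hqa : 0 < qa) (hqb : 0 < qb) (hqc : 0 < qc) (hqd : 0 < qd)
    (hbalance : k * qa * qb = qc * qd) :
    log (k * a * b / (c * d)) = log (a / qa) + log (b / qb) - log (c / qc) - log (d / qd) := by
  have hratio : k * a * b / (c * d) = a / qa * (b / qb) / (c / qc * (d / qd)) := by
    field_simp
    exact hbalance
  rw [hratio, log_div (by positivity) (by positivity), log_mul (by positivity) (by positivity),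
    log_mul (by positivity) (by positivity)]
  ring

lemma log_mul_mul_div_sq_eq_of_balance {k a b c qa qb qc : ℝ}
    (ha : 0 < a) (hb : 0 < b) (hc : 0 < c) (hqa : 0 < qa) (hqb : 0 < qb) (hqc : 0 < qc)
    (hbalance : k * qa * qb = qc ^ 2) :
    log (k * a * b / c ^ 2) = log (a / qa) + log (b / qb) - 2 * log (c / qc) := by
  rw [sq] at hbalance ⊢
  rw [log_mul_mul_div_mul_eq_of_balance ha hb hc hc hqa hqb hqc hqc hbalance]
  ring

noncomputable def entropyDissipation (p00 p10 p01 p20 p02 p11 : ℝ) : ℝ :=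
  -2*(p00*p20 - p10^2/4) * log (4*p00*p20/p10^2)
    - 2*(p00*p02 - p01^2/4) * log (4*p00*p02/p01^2)
    - 2*(p00*p11 - p01*p10/2) * log (2*p00*p11/(p01*p10))
    - (p01*p20 - p10*p11/2) * log (2*p01*p20/(p10*p11))
    - (p10*p02 - p01*p11/2) * log (2*p10*p02/(p01*p11))

lemma entropyDissipation_nonpos {p00 p10 p01 p20 p02 p11 : ℝ}
    (h00 : 0 < p00) (h10 : 0 < p10) (h01 : 0 < p01) (h20 : 0 < p20) (h02 : 0 < p02)
    (h11 : 0 < p11) : entropyDissipation p00 p10 p01 p20 p02 p11 ≤ 0 := by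
  have T1 := sub_div_mul_log_mul_div_nonneg four_pos (mul_pos h00 h20) (pow_pos h10 2)
  have T2 := sub_div_mul_log_mul_div_nonneg four_pos (mul_pos h00 h02) (pow_pos h01 2)
  have T3 := sub_div_mul_log_mul_div_nonneg two_pos (mul_pos h00 h11) (mul_pos h01 h10)
  have T4 := sub_div_mul_log_mul_div_nonneg two_pos (mul_pos h01 h20) (mul_pos h10 h11)
  have T5 := sub_div_mul_log_mul_div_nonneg two_pos (mul_pos h10 h02) (mul_pos h01 h11)
  simp only [← mul_assoc] at T1 T2 T3 T4 T5
  unfold entropyDissipation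
  linarith

lemma entropy_production_eq {β p00 p10 p01 p20 p02 p11 l00 l10 l01 l20 l02 l11 : ℝ}
    (hmass : p00 + p10 + p01 + p20 + p02 + p11 = 1)
    (hl1 : log (4*p00*p20/p10^2) = l00 + l20 - 2 * l10)
    (hl2 : log (4*p00*p02/p01^2) = l00 + l02 - 2 * l01)
    (hl3 : log (2*p00*p11/(p01*p10)) = l00 + l11 - l01 - l10)
    (hl4 : log (2*p01*p20/(p10*p11)) = l01 + l20 - l10 - l11)
    (hl5 : log (2*p10*p02/(p01*p11)) = l10 + l02 - l01 - l11) :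
    (-2*β*p00*(p02 + p20 + p11) + (β/2)*(p10^2 + p01^2) + β*p10*p01) * (l00 + 1)
      + (-β*p10*(1 - p00 - p20)
          + β*(4*p00*p20 + p01*p20 + 2*p00*p11 + ((p10 + p01)/2)*p11)) * (l10 + 1)
      + (-β*p01*(1 - p00 - p02)
          + β*(4*p00*p02 + p02*p10 + 2*p00*p11 + ((p10 + p01)/2)*p11)) * (l01 + 1)
      + (-β*p20*(2*p00 + p01) + (β/2)*p10^2 + (β/2)*p10*p11) * (l20 + 1)
      + (-β*p02*(2*p00 + p10) + (β/2)*p01^2 + (β/2)*p01*p11) * (l02 + 1)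
      + (-β*p11*(2*p00 + p01 + p10)
          + β*(p10*p01 + p20*p01 + p10*p02 + ((p10 + p01)/2)*p11)) * (l11 + 1)
      = β * entropyDissipation p00 p10 p01 p20 p02 p11 := by
  unfold entropyDissipation
  rw [hl1, hl2, hl3, hl4, hl5]
  linear_combination (β*p10*(l10 + 1) + β*p01*(l01 + 1)) * hmass

theorem stmt_4_general
    (β ρm ρp : ℝ) (hβ : 0 < β)
    (hρm : ρm ∈ Set.Ioo (0:ℝ) 1) (hρp : ρp ∈ Set.Ioo (0:ℝ) 1) (hsum : ρm + ρp < 1)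
    (p00 p10 p01 p20 p02 p11 : ℝ → ℝ)
    (q00 q10 q01 q20 q02 q11 : ℝ)
    (e00 : q00 = (1 - ρm - ρp)^2) (e10 : q10 = 2*ρm*(1 - ρm - ρp))
    (e01 : q01 = 2*ρp*(1 - ρm - ρp)) (e20 : q20 = ρm^2)
    (e02 : q02 = ρp^2) (e11 : q11 = 2*ρm*ρp)
    (hpos : ∀ t ≥ (0:ℝ), 0 < p00 t ∧ 0 < p10 t ∧ 0 < p01 t ∧ 0 < p20 t ∧ 0 < p02 t ∧ 0 < p11 t)
    (hconsS : ∀ t ≥ (0:ℝ), p00 t + p10 t + p01 t + p20 t + p02 t + p11 t = 1)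
    (h00 : ∀ t ≥ (0:ℝ), HasDerivAt p00
      (-2*β*(p00 t)*(p02 t + p20 t + p11 t)
        + (β/2)*((p10 t)^2 + (p01 t)^2) + β*(p10 t)*(p01 t)) t)
    (h10 : ∀ t ≥ (0:ℝ), HasDerivAt p10
      (-β*(p10 t)*(1 - p00 t - p20 t)
        + β*(4*(p00 t)*(p20 t) + (p01 t)*(p20 t) + 2*(p00 t)*(p11 t)
          + ((p10 t + p01 t)/2)*(p11 t))) t)
    (h01 : ∀ t ≥ (0:ℝ), HasDerivAt p01
      (-β*(p01 t)*(1 - p00 t - p02 t)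
        + β*(4*(p00 t)*(p02 t) + (p02 t)*(p10 t) + 2*(p00 t)*(p11 t)
          + ((p10 t + p01 t)/2)*(p11 t))) t)
    (h20 : ∀ t ≥ (0:ℝ), HasDerivAt p20
      (-β*(p20 t)*(2*p00 t + p01 t) + (β/2)*(p10 t)^2 + (β/2)*(p10 t)*(p11 t)) t)
    (h02 : ∀ t ≥ (0:ℝ), HasDerivAt p02
      (-β*(p02 t)*(2*p00 t + p10 t) + (β/2)*(p01 t)^2 + (β/2)*(p01 t)*(p11 t)) t)
    (h11 : ∀ t ≥ (0:ℝ), HasDerivAt p11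
      (-β*(p11 t)*(2*p00 t + p01 t + p10 t)
        + β*((p10 t)*(p01 t) + (p20 t)*(p01 t) + (p10 t)*(p02 t)
          + ((p10 t + p01 t)/2)*(p11 t))) t)
    (H : ℝ → ℝ)
    (hH : ∀ t, H t = p00 t * Real.log (p00 t / q00) + p10 t * Real.log (p10 t / q10)
      + p01 t * Real.log (p01 t / q01) + p20 t * Real.log (p20 t / q20)
      + p02 t * Real.log (p02 t / q02) + p11 t * Real.log (p11 t / q11)) :
    ∀ t ≥ (0:ℝ),
      HasDerivAt H
        (β * (-2*((p00 t)*(p20 t) - (p10 t)^2/4) * Real.log (4*(p00 t)*(p20 t)/(p10 t)^2)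
          - 2*((p00 t)*(p02 t) - (p01 t)^2/4) * Real.log (4*(p00 t)*(p02 t)/(p01 t)^2)
          - 2*((p00 t)*(p11 t) - (p01 t)*(p10 t)/2)
              * Real.log (2*(p00 t)*(p11 t)/((p01 t)*(p10 t)))
          - ((p01 t)*(p20 t) - (p10 t)*(p11 t)/2)
              * Real.log (2*(p01 t)*(p20 t)/((p10 t)*(p11 t)))
          - ((p10 t)*(p02 t) - (p01 t)*(p11 t)/2)
              * Real.log (2*(p10 t)*(p02 t)/((p01 t)*(p11 t))))) t ∧
      β * (-2*((p00 t)*(p20 t) - (p10 t)^2/4) * Real.log (4*(p00 t)*(p20 t)/(p10 t)^2)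
          - 2*((p00 t)*(p02 t) - (p01 t)^2/4) * Real.log (4*(p00 t)*(p02 t)/(p01 t)^2)
          - 2*((p00 t)*(p11 t) - (p01 t)*(p10 t)/2)
              * Real.log (2*(p00 t)*(p11 t)/((p01 t)*(p10 t)))
          - ((p01 t)*(p20 t) - (p10 t)*(p11 t)/2)
              * Real.log (2*(p01 t)*(p20 t)/((p10 t)*(p11 t)))
          - ((p10 t)*(p02 t) - (p01 t)*(p11 t)/2)
              * Real.log (2*(p10 t)*(p02 t)/((p01 t)*(p11 t)))) ≤ 0 := by
  
  intro t ht
  obtain ⟨h00t, h10t, h01t, h20t, h02t, h11t⟩ := hpos t ht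
  have hρm0 : 0 < ρm := hρm.1
  have hρp0 : 0 < ρp := hρp.1
  have hρ0 : 0 < 1 - ρm - ρp := by linarith
  have hq00 : 0 < q00 := e00 ▸ by positivity
  have hq10 : 0 < q10 := e10 ▸ by positivity
  have hq01 : 0 < q01 := e01 ▸ by positivity
  have hq20 : 0 < q20 := e20 ▸ by positivity
  have hq02 : 0 < q02 := e02 ▸ by positivity
  have hq11 : 0 < q11 := e11 ▸ by positivity
  have hderiv := (((((hasDerivAt_mul_log_div_const (h00 t ht) h00t.ne' hq00.ne').add
    (hasDerivAt_mul_log_div_const (h10 t ht) h10t.ne' hq10.ne')).add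
    (hasDerivAt_mul_log_div_const (h01 t ht) h01t.ne' hq01.ne')).add
    (hasDerivAt_mul_log_div_const (h20 t ht) h20t.ne' hq20.ne')).add
    (hasDerivAt_mul_log_div_const (h02 t ht) h02t.ne' hq02.ne')).add
    (hasDerivAt_mul_log_div_const (h11 t ht) h11t.ne' hq11.ne')
  rw [show H = _ from funext hH]
  refine ⟨hderiv.congr_deriv (entropy_production_eq (hconsS t ht)
      (log_mul_mul_div_sq_eq_of_balance h00t h20t h10t hq00 hq20 hq10 (by subst_vars; ring))
      (log_mul_mul_div_sq_eq_of_balance h00t h02t h01t hq00 hq02 hq01 (by subst_vars; ring))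
      (log_mul_mul_div_mul_eq_of_balance h00t h11t h01t h10t hq00 hq11 hq01 hq10
        (by subst_vars; ring))
      (log_mul_mul_div_mul_eq_of_balance h01t h20t h10t h11t hq01 hq20 hq10 hq11
        (by subst_vars; ring))
      (log_mul_mul_div_mul_eq_of_balance h10t h02t h01t h11t hq10 hq02 hq01 hq11
        (by subst_vars; ring))),
    mul_nonpos_of_nonneg_of_nonpos hβ.le (entropyDissipation_nonpos h00t h10t h01t h20t h02t h11t)⟩

/-- Entropy dissipation identity for the L = 2 mean-field system with λ = 0:
the relative entropy with respect to the trinomial equilibrium decreases,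
and (1/β) H'(t) equals the sum of the five nonpositive reaction terms. -/
theorem stmt_4
    (β ρm ρp : ℝ) (hβ : 0 < β)
    (hρm : ρm ∈ Set.Ioo (0:ℝ) 1) (hρp : ρp ∈ Set.Ioo (0:ℝ) 1) (hsum : ρm + ρp < 1)
    (p00 p10 p01 p20 p02 p11 : ℝ → ℝ)
    (q00 q10 q01 q20 q02 q11 : ℝ)
    (e00 : q00 = (1 - ρm - ρp)^2) (e10 : q10 = 2*ρm*(1 - ρm - ρp))
    (e01 : q01 = 2*ρp*(1 - ρm - ρp)) (e20 : q20 = ρm^2)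
    (e02 : q02 = ρp^2) (e11 : q11 = 2*ρm*ρp)
    (hpos : ∀ t ≥ (0:ℝ), 0 < p00 t ∧ 0 < p10 t ∧ 0 < p01 t ∧ 0 < p20 t ∧ 0 < p02 t ∧ 0 < p11 t)
    (hconsB : ∀ t ≥ (0:ℝ), (p11 t + p10 t + 2*p20 t)/2 = ρm)
    (hconsR : ∀ t ≥ (0:ℝ), (p11 t + p01 t + 2*p02 t)/2 = ρp)
    (hconsS : ∀ t ≥ (0:ℝ), p00 t + p10 t + p01 t + p20 t + p02 t + p11 t = 1)
    (h00 : ∀ t ≥ (0:ℝ), HasDerivAt p00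
      (-2*β*(p00 t)*(p02 t + p20 t + p11 t)
        + (β/2)*((p10 t)^2 + (p01 t)^2) + β*(p10 t)*(p01 t)) t)
    (h10 : ∀ t ≥ (0:ℝ), HasDerivAt p10
      (-β*(p10 t)*(1 - p00 t - p20 t)
        + β*(4*(p00 t)*(p20 t) + (p01 t)*(p20 t) + 2*(p00 t)*(p11 t)
          + ((p10 t + p01 t)/2)*(p11 t))) t)
    (h01 : ∀ t ≥ (0:ℝ), HasDerivAt p01
      (-β*(p01 t)*(1 - p00 t - p02 t)
        + β*(4*(p00 t)*(p02 t) + (p02 t)*(p10 t) + 2*(p00 t)*(p11 t)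
          + ((p10 t + p01 t)/2)*(p11 t))) t)
    (h20 : ∀ t ≥ (0:ℝ), HasDerivAt p20
      (-β*(p20 t)*(2*p00 t + p01 t) + (β/2)*(p10 t)^2 + (β/2)*(p10 t)*(p11 t)) t)
    (h02 : ∀ t ≥ (0:ℝ), HasDerivAt p02
      (-β*(p02 t)*(2*p00 t + p10 t) + (β/2)*(p01 t)^2 + (β/2)*(p01 t)*(p11 t)) t)
    (h11 : ∀ t ≥ (0:ℝ), HasDerivAt p11
      (-β*(p11 t)*(2*p00 t + p01 t + p10 t)
        + β*((p10 t)*(p01 t) + (p20 t)*(p01 t) + (p10 t)*(p02 t)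
          + ((p10 t + p01 t)/2)*(p11 t))) t)
    (H : ℝ → ℝ)
    (hH : ∀ t, H t = p00 t * Real.log (p00 t / q00) + p10 t * Real.log (p10 t / q10)
      + p01 t * Real.log (p01 t / q01) + p20 t * Real.log (p20 t / q20)
      + p02 t * Real.log (p02 t / q02) + p11 t * Real.log (p11 t / q11)) :
    ∀ t ≥ (0:ℝ),
      HasDerivAt H
        (β * (-2*((p00 t)*(p20 t) - (p10 t)^2/4) * Real.log (4*(p00 t)*(p20 t)/(p10 t)^2)
          - 2*((p00 t)*(p02 t) - (p01 t)^2/4) * Real.log (4*(p00 t)*(p02 t)/(p01 t)^2)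
          - 2*((p00 t)*(p11 t) - (p01 t)*(p10 t)/2)
              * Real.log (2*(p00 t)*(p11 t)/((p01 t)*(p10 t)))
          - ((p01 t)*(p20 t) - (p10 t)*(p11 t)/2)
              * Real.log (2*(p01 t)*(p20 t)/((p10 t)*(p11 t)))
          - ((p10 t)*(p02 t) - (p01 t)*(p11 t)/2)
              * Real.log (2*(p10 t)*(p02 t)/((p01 t)*(p11 t))))) t ∧
      β * (-2*((p00 t)*(p20 t) - (p10 t)^2/4) * Real.log (4*(p00 t)*(p20 t)/(p10 t)^2)
          - 2*((p00 t)*(p02 t) - (p01 t)^2/4) * Real.log (4*(p00 t)*(p02 t)/(p01 t)^2)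
          - 2*((p00 t)*(p11 t) - (p01 t)*(p10 t)/2)
              * Real.log (2*(p00 t)*(p11 t)/((p01 t)*(p10 t)))
          - ((p01 t)*(p20 t) - (p10 t)*(p11 t)/2)
              * Real.log (2*(p01 t)*(p20 t)/((p10 t)*(p11 t)))
          - ((p10 t)*(p02 t) - (p01 t)*(p11 t)/2)
              * Real.log (2*(p10 t)*(p02 t)/((p01 t)*(p11 t)))) ≤ 0 :=
  stmt_4_general β ρm ρp hβ hρm hρp hsum p00 p10 p01 p20 p02 p11 q00 q10 q01 q20 q02 q11 e00 e10 e01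
    e20 e02 e11 hpos hconsS h00 h10 h01 h20 h02 h11 H hH
end

section
/- Let λ = 0, β > 0, and let {f_{i,±}} satisfy the conservation law (1/N)Σ f_{j,±}(t) = ρ_± for all t. Then the system reduces to f'_{i,±} = Nβ(ρ_± f_{i,0} - ρ₀ f_{i,±}) with ρ₀ = 1 - ρ₊ - ρ₋, and each f_{i,±}(t) converges to ρ_± as t → ∞ at exponential rate Nβρ₀; explicitly, setting h_i = f_{i,+} + f_{i,-} and g_i = f_{i,+} - f_{i,-}, one has h_i(t) = ρ₊+ρ₋ + (h_i(0)-(ρ₊+ρ₋))e^{-Nβt} and g_i(t) = (ρ₊-ρ₋) + (g_i(0)-(ρ₊-ρ₋) - (ρ₊-ρ₋)(h_i(0)-(ρ₊+ρ₋))/(1-ρ₀)) e^{-Nβρ₀ t} + ((ρ₊-ρ₋)(h_i(0)-(ρ₊+ρ₋))/(1-ρ₀)) e^{-Nβt}. -/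
/-!
Conservation pins every population sum at `N ρ±`, so in the mean-field equations the coupling to
the other neighbourhoods becomes `Nβ (ρ± f_{i,0} - ρ₀ f_{i,±})`: the self-interaction terms cancel.
The sum `h = f₊ + f₋` then solves `h' = Nβ (ρ₊ + ρ₋ - h)`, and the difference `g = f₊ - f₋`,
once the `e^{-Nβt}` mode forced by `h` is subtracted, solves `u' = -Nβρ₀ u`. Each scalar linear
equation `u' = -k u` is integrated through the constancy of `u(t) e^{kt}`.
-/

open Finset Filter Real Topology

theorem eq_mul_exp_of_hasDerivAt {u : ℝ → ℝ} {k : ℝ}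
    (hu : ∀ t ≥ (0:ℝ), HasDerivAt u (-k * u t) t) {t : ℝ} (ht : 0 ≤ t) :
    u t = u 0 * exp (-k * t) := by
  set w : ℝ → ℝ := fun s => u s * exp (k * s)
  have hw : ∀ s ≥ (0:ℝ), HasDerivAt w 0 s := fun s hs => by
    have hexp : HasDerivAt (fun s => exp (k * s)) (exp (k * s) * k) s :=
      ((hasDerivAt_id s).const_mul k).exp.congr_deriv (by simp)
    exact ((hu s hs).mul hexp).congr_deriv (by ring)
  have hconst : w t = w 0 :=
    constant_of_has_deriv_right_zero (fun s hs => (hw s hs.1).continuousAt.continuousWithinAt)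
      (fun s hs => (hw s hs.1).hasDerivWithinAt) t ⟨ht, le_rfl⟩
  have hinv : exp (-k * t) * exp (k * t) = 1 := by rw [← exp_add]; simp
  simp only [w, mul_zero, exp_zero, mul_one] at hconst
  linear_combination exp (-k * t) * hconst - u t * hinv

theorem tendsto_exp_neg_mul_atTop {k : ℝ} (hk : 0 < k) :
    Tendsto (fun t => exp (-k * t)) atTop (𝓝 0) :=
  tendsto_exp_comp_nhds_zero.2 <| (tendsto_const_mul_atBot_of_neg (neg_neg_of_pos hk)).2 tendsto_id

theorem meanField_rhs_eq_of_sum_eq {ι : Type*} [Fintype ι] [DecidableEq ι] (β n ρ ρ0 : ℝ) (x y : ι → ℝ)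
    (hx : ∑ j, x j = n * ρ) (hy : ∑ j, y j = n * ρ0) (i : ι) :
    y i * ∑ j ∈ univ.erase i, β * x j - x i * β * ∑ j ∈ univ.erase i, y j
      = n * β * (ρ * y i - ρ0 * x i) := by
  rw [← mul_sum, sum_erase_eq_sub (mem_univ i), sum_erase_eq_sub (mem_univ i), hx, hy]
  ring

section ReducedSystem

variable {p m : ℝ → ℝ} {a ρp ρm ρ0 : ℝ}

theorem add_eq_of_reduced (hρ0 : ρ0 = 1 - ρp - ρm)
    (hp : ∀ t ≥ (0:ℝ), HasDerivAt p (a * (ρp * (1 - p t - m t) - ρ0 * p t)) t)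
    (hm : ∀ t ≥ (0:ℝ), HasDerivAt m (a * (ρm * (1 - p t - m t) - ρ0 * m t)) t)
    {t : ℝ} (ht : 0 ≤ t) :
    p t + m t = ρp + ρm + (p 0 + m 0 - (ρp + ρm)) * exp (-a * t) := by
  have hu : ∀ s ≥ (0:ℝ), HasDerivAt (fun s => p s + m s - (ρp + ρm))
      (-a * (p s + m s - (ρp + ρm))) s := fun s hs =>
    (((hp s hs).add (hm s hs)).sub_const _).congr_deriv (by rw [hρ0]; ring)
  linear_combination eq_mul_exp_of_hasDerivAt hu ht

theorem sub_eq_of_reduced (hρ0 : ρ0 = 1 - ρp - ρm) (hρ0_ne : 1 - ρ0 ≠ 0)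
    (hp : ∀ t ≥ (0:ℝ), HasDerivAt p (a * (ρp * (1 - p t - m t) - ρ0 * p t)) t)
    (hm : ∀ t ≥ (0:ℝ), HasDerivAt m (a * (ρm * (1 - p t - m t) - ρ0 * m t)) t)
    {t : ℝ} (ht : 0 ≤ t) :
    p t - m t = (ρp - ρm)
      + (p 0 - m 0 - (ρp - ρm) - (ρp - ρm) * (p 0 + m 0 - (ρp + ρm)) / (1 - ρ0))
        * exp (-(a * ρ0) * t)
      + (ρp - ρm) * (p 0 + m 0 - (ρp + ρm)) / (1 - ρ0) * exp (-a * t) := by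
  set B := (ρp - ρm) * (p 0 + m 0 - (ρp + ρm)) / (1 - ρ0)
  have hB : B * (1 - ρ0) = (ρp - ρm) * (p 0 + m 0 - (ρp + ρm)) := div_mul_cancel₀ _ hρ0_ne
  have hu : ∀ s ≥ (0:ℝ), HasDerivAt (fun s => p s - m s - (ρp - ρm) - B * exp (-a * s))
      (-(a * ρ0) * (p s - m s - (ρp - ρm) - B * exp (-a * s))) s := fun s hs => by
    have hexp : HasDerivAt (fun s => exp (-a * s)) (exp (-a * s) * -a) s :=
      ((hasDerivAt_id s).const_mul (-a)).exp.congr_deriv (by simp)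
    refine ((((hp s hs).sub (hm s hs)).sub_const _).sub (hexp.const_mul B)).congr_deriv ?_
    linear_combination -(a * (ρp - ρm)) * add_eq_of_reduced hρ0 hp hm hs
      - a * (ρp - ρm) * hρ0 + a * exp (-a * s) * hB
  have hsol := eq_mul_exp_of_hasDerivAt hu ht
  simp only [mul_zero, exp_zero, mul_one] at hsol
  linear_combination hsol

theorem tendsto_of_reduced (hρ0 : ρ0 = 1 - ρp - ρm) (hρ0_ne : 1 - ρ0 ≠ 0) (ha : 0 < a)
    (hρ0_pos : 0 < ρ0)
    (hp : ∀ t ≥ (0:ℝ), HasDerivAt p (a * (ρp * (1 - p t - m t) - ρ0 * p t)) t)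
    (hm : ∀ t ≥ (0:ℝ), HasDerivAt m (a * (ρm * (1 - p t - m t) - ρ0 * m t)) t) :
    Tendsto p atTop (𝓝 ρp) ∧ Tendsto m atTop (𝓝 ρm) := by
  have hE₁ := tendsto_exp_neg_mul_atTop ha
  have hE₂ := tendsto_exp_neg_mul_atTop (mul_pos ha hρ0_pos)
  set C := p 0 + m 0 - (ρp + ρm)
  set B := (ρp - ρm) * C / (1 - ρ0)
  have hsum : Tendsto (fun t => p t + m t) atTop (𝓝 (ρp + ρm)) := by
    have hlim := (tendsto_const_nhds (x := ρp + ρm)).add (hE₁.const_mul C)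
    rw [mul_zero, add_zero] at hlim
    refine hlim.congr' ?_
    filter_upwards [eventually_ge_atTop 0] with t ht
    exact (add_eq_of_reduced hρ0 hp hm ht).symm
  have hdiff : Tendsto (fun t => p t - m t) atTop (𝓝 (ρp - ρm)) := by
    have hlim := ((tendsto_const_nhds (x := ρp - ρm)).add
      (hE₂.const_mul (p 0 - m 0 - (ρp - ρm) - B))).add (hE₁.const_mul B)
    rw [mul_zero, mul_zero, add_zero, add_zero] at hlim
    refine hlim.congr' ?_
    filter_upwards [eventually_ge_atTop 0] with t ht
    exact (sub_eq_of_reduced hρ0 hρ0_ne hp hm ht).symm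
  constructor
  · convert (hsum.add hdiff).div_const 2 using 2 <;> ring
  · convert (hsum.sub hdiff).div_const 2 using 2 <;> ring

end ReducedSystem

/-- With λ = 0 and β > 0, the N-neighborhood system reduces to a linear system,
solves explicitly in the variables h_i = f_{i,+}+f_{i,-}, g_i = f_{i,+}-f_{i,-},
and converges exponentially (rate Nβρ₀) to the homogeneous equilibrium. -/
theorem stmt_7
    (N : ℕ) (hN : 2 ≤ N) (β ρp ρm : ℝ) (hβ : 0 < β)
    (hρp : ρp ∈ Set.Ioo (0:ℝ) 1) (hρm : ρm ∈ Set.Ioo (0:ℝ) 1)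
    (ρ0 : ℝ) (hρ0 : ρ0 = 1 - ρp - ρm) (hρ0pos : 0 < ρ0)
    (fp fm : Fin N → ℝ → ℝ)
    (f0 : Fin N → ℝ → ℝ) (hf0 : ∀ i t, f0 i t = 1 - fp i t - fm i t)
    (hp : ∀ i, ∀ t ≥ (0:ℝ), HasDerivAt (fp i)
      (f0 i t * ∑ j ∈ univ.erase i, β * fp j t
        - fp i t * β * ∑ j ∈ univ.erase i, f0 j t) t)
    (hm : ∀ i, ∀ t ≥ (0:ℝ), HasDerivAt (fm i)
      (f0 i t * ∑ j ∈ univ.erase i, β * fm j t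
        - fm i t * β * ∑ j ∈ univ.erase i, f0 j t) t)
    (hconsp : ∀ t ≥ (0:ℝ), (1 / (N:ℝ)) * ∑ j, fp j t = ρp)
    (hconsm : ∀ t ≥ (0:ℝ), (1 / (N:ℝ)) * ∑ j, fm j t = ρm) :
    (∀ i, ∀ t ≥ (0:ℝ),
      HasDerivAt (fp i) ((N:ℝ) * β * (ρp * f0 i t - ρ0 * fp i t)) t ∧
      HasDerivAt (fm i) ((N:ℝ) * β * (ρm * f0 i t - ρ0 * fm i t)) t) ∧
    (∀ i, ∀ t ≥ (0:ℝ),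
      fp i t + fm i t
        = ρp + ρm + (fp i 0 + fm i 0 - (ρp + ρm)) * Real.exp (-(N:ℝ) * β * t) ∧
      fp i t - fm i t
        = (ρp - ρm)
          + (fp i 0 - fm i 0 - (ρp - ρm)
              - (ρp - ρm) * (fp i 0 + fm i 0 - (ρp + ρm)) / (1 - ρ0))
            * Real.exp (-(N:ℝ) * β * ρ0 * t)
          + (ρp - ρm) * (fp i 0 + fm i 0 - (ρp + ρm)) / (1 - ρ0)
            * Real.exp (-(N:ℝ) * β * t)) ∧
    (∀ i, Tendsto (fp i) atTop (nhds ρp) ∧ Tendsto (fm i) atTop (nhds ρm)) := by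
  have hN_pos : (0:ℝ) < N := Nat.cast_pos.2 (by omega)
  have hρ0_ne : 1 - ρ0 ≠ 0 := by rw [hρ0]; linarith [hρp.1, hρm.1]
  have hreduced : ∀ i, ∀ t ≥ (0:ℝ),
      HasDerivAt (fp i) ((N:ℝ) * β * (ρp * f0 i t - ρ0 * fp i t)) t ∧
      HasDerivAt (fm i) ((N:ℝ) * β * (ρm * f0 i t - ρ0 * fm i t)) t := by
    intro i t ht
    have hSp : ∑ j, fp j t = N * ρp := by rw [← hconsp t ht]; field_simp
    have hSm : ∑ j, fm j t = N * ρm := by rw [← hconsm t ht]; field_simp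
    have hS0 : ∑ j, f0 j t = N * ρ0 := by
      simp only [hf0, sum_sub_distrib, hSp, hSm, sum_const, card_univ, Fintype.card_fin,
        nsmul_eq_mul, mul_one, hρ0]
      ring
    exact ⟨(hp i t ht).congr_deriv (meanField_rhs_eq_of_sum_eq β N ρp ρ0 _ _ hSp hS0 i),
      (hm i t ht).congr_deriv (meanField_rhs_eq_of_sum_eq β N ρm ρ0 _ _ hSm hS0 i)⟩
  have hp' (i) : ∀ t ≥ (0:ℝ), HasDerivAt (fp i)
      ((N:ℝ) * β * (ρp * (1 - fp i t - fm i t) - ρ0 * fp i t)) t := fun t ht =>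
    hf0 i t ▸ (hreduced i t ht).1
  have hm' (i) : ∀ t ≥ (0:ℝ), HasDerivAt (fm i)
      ((N:ℝ) * β * (ρm * (1 - fp i t - fm i t) - ρ0 * fm i t)) t := fun t ht =>
    hf0 i t ▸ (hreduced i t ht).2
  refine ⟨hreduced, fun i t ht => ⟨?_, ?_⟩,
    fun i => tendsto_of_reduced hρ0 hρ0_ne (mul_pos hN_pos hβ) hρ0pos (hp' i) (hm' i)⟩
  · simpa only [neg_mul] using add_eq_of_reduced hρ0 (hp' i) (hm' i) ht
  · simpa only [neg_mul] using sub_eq_of_reduced hρ0 hρ0_ne (hp' i) (hm' i) ht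
end

section
/- Let N ≥ 2, β = 0, λ > 0, and suppose max{ρ₊, ρ₋} ≥ (N-1)/N with ρ₋ = max{ρ₊,ρ₋}. Fix i₀ ∈ {1,…,N} and define f̄_{i₀,+} = Nρ₊, f̄_{i₀,-} = Nρ₋ - (N-1), and f̄_{i,+} = 0, f̄_{i,-} = 1 for i ≠ i₀. Then {f̄_{i,±}} is an equilibrium of the system f'_{i,±} = λ( f_{i,0} Σ_{j=1}^N f_{j,+} f_{j,-} - Nρ₀ f_{i,+} f_{i,-} ), where f_{i,0} = 1 - f_{i,+} - f_{i,-} and ρ₀ = 1 - ρ₊ - ρ₋, and it is not the homogeneous equilibrium (assuming ρ₊ > 0). -/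
open Finset

/-- A segregated non-homogeneous equilibrium of the β = 0 system when
max{ρ₊,ρ₋} = ρ₋ ≥ (N-1)/N. -/
theorem stmt_8
    (N : ℕ) (hN : 2 ≤ N) (lam ρp ρm ρ0 : ℝ) (hlam : 0 < lam)
    (hρp : ρp ∈ Set.Ioo (0:ℝ) 1) (hρm : ρm ∈ Set.Ioo (0:ℝ) 1) (hsum : ρp + ρm < 1)
    (hρ0 : ρ0 = 1 - ρp - ρm)
    (hmax : ρm = max ρp ρm) (hbig : ((N:ℝ) - 1) / (N:ℝ) ≤ max ρp ρm)
    (i₀ : Fin N) (fp fm f0 : Fin N → ℝ)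
    (hfi₀p : fp i₀ = (N:ℝ) * ρp) (hfi₀m : fm i₀ = (N:ℝ) * ρm - ((N:ℝ) - 1))
    (hfp : ∀ i, i ≠ i₀ → fp i = 0) (hfm : ∀ i, i ≠ i₀ → fm i = 1)
    (hf0 : ∀ i, f0 i = 1 - fp i - fm i) :
    (∀ i : Fin N,
      lam * (f0 i * ∑ j, fp j * fm j - (N:ℝ) * ρ0 * fp i * fm i) = 0) ∧
    (∃ i : Fin N, fp i ≠ ρp ∨ fm i ≠ ρm) := by
  have hS : (∑ j, fp j * fm j) = fp i₀ * fm i₀ := by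
    apply Finset.sum_eq_single
    · intro j _ hj
      rw [hfp j hj]; ring
    · intro h; exact absurd (Finset.mem_univ i₀) h
  constructor
  · intro i
    by_cases hi : i = i₀
    · subst hi
      have h0 : f0 i = (N:ℝ) * ρ0 := by
        rw [hf0, hfi₀p, hfi₀m, hρ0]; ring
      rw [hS, h0]; ring
    · rw [hS, hfp i hi, hf0, hfp i hi, hfm i hi]; ring
  · refine ⟨i₀, Or.inl ?_⟩
    rw [hfi₀p]
    intro h
    have hN' : (2:ℝ) ≤ (N:ℝ) := by exact_mod_cast hN
    have : ((N:ℝ) - 1) * ρp = 0 := by linarith [h]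
    rcases mul_eq_zero.mp this with h1 | h2
    · linarith
    · exact absurd h2 (ne_of_gt hρp.1)
end

section
/- Let N ≥ 2, β > 0, λ ≥ 0, and ρ₊ = ρ₋ = ρ ∈ (0, 1/2). Suppose {F_{i,±}} is an equilibrium of the system f'_{i,±} = f_{i,0} Σ_{j≠i}(β + λ f_{j,∓}) f_{j,±} - f_{i,±}(β + λ f_{i,∓}) Σ_{j≠i} f_{j,0} with F_{i,+} = F_{i,-} = a_i ∈ (0, 1/2) for each i and Σ_i a_i = Nρ. Then a_i = ρ for all i; that is, the homogeneous configuration is the unique such equilibrium. -/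
open Finset

/-- Uniqueness of the symmetric equilibrium when ρ₊ = ρ₋ = ρ: any stationary
configuration with F_{i,+} = F_{i,-} = a_i ∈ (0,1/2) and mean ρ must be
homogeneous. -/
theorem stmt_14
    (N : ℕ) (hN : 2 ≤ N) (β lam ρ : ℝ) (hβ : 0 < β) (hlam : 0 ≤ lam)
    (hρ : ρ ∈ Set.Ioo (0:ℝ) (1/2))
    (a : Fin N → ℝ) (ha : ∀ i, a i ∈ Set.Ioo (0:ℝ) (1/2))
    (hsum : ∑ i, a i = (N:ℝ) * ρ)
    (hstat : ∀ i : Fin N,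
      (1 - 2 * a i) * ∑ j ∈ univ.erase i, (β + lam * a j) * a j
        - a i * (β + lam * a i) * ∑ j ∈ univ.erase i, (1 - 2 * a j) = 0) :
    ∀ i, a i = ρ := by
  have hNpos : 0 < N := by omega
  set Sf : ℝ := ∑ j, (β + lam * a j) * a j with hSf
  set Sg : ℝ := ∑ j, (1 - 2 * a j) with hSg
  have hSgpos : 0 < Sg := by
    apply Finset.sum_pos
    · intro j _
      have := (ha j).2; linarith
    · exact Finset.univ_nonempty_iff.mpr ⟨⟨0, hNpos⟩⟩
  have key : ∀ i, (1 - 2 * a i) * Sf = a i * (β + lam * a i) * Sg := by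
    intro i
    have h := hstat i
    rw [Finset.sum_erase_eq_sub (Finset.mem_univ i),
        Finset.sum_erase_eq_sub (Finset.mem_univ i)] at h
    rw [← hSf, ← hSg] at h
    ring_nf at h ⊢
    linarith
  have heq : ∀ i j, a i = a j := by
    intro i j
    have hi := key i
    have hj := key j
    have hcross : a i * (β + lam * a i) * (1 - 2 * a j)
        = a j * (β + lam * a j) * (1 - 2 * a i) := by
      have h1 : a i * (β + lam * a i) * (1 - 2 * a j) * Sg
          = a j * (β + lam * a j) * (1 - 2 * a i) * Sg := by
        calc a i * (β + lam * a i) * (1 - 2 * a j) * Sg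
            = (a i * (β + lam * a i) * Sg) * (1 - 2 * a j) := by ring
          _ = ((1 - 2 * a i) * Sf) * (1 - 2 * a j) := by rw [hi]
          _ = ((1 - 2 * a j) * Sf) * (1 - 2 * a i) := by ring
          _ = (a j * (β + lam * a j) * Sg) * (1 - 2 * a i) := by rw [hj]
          _ = a j * (β + lam * a j) * (1 - 2 * a i) * Sg := by ring
      exact mul_right_cancel₀ (ne_of_gt hSgpos) h1
    obtain ⟨hi1, hi2⟩ := ha i
    obtain ⟨hj1, hj2⟩ := ha j
    have hfac : 0 < a i + a j - 2 * (a i * a j) := by nlinarith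
    have hfac2 : 0 < β + lam * (a i + a j - 2 * (a i * a j)) := by
      nlinarith [mul_nonneg hlam hfac.le]
    rcases lt_trichotomy (a i) (a j) with h | h | h
    · exfalso
      have := mul_pos (sub_pos.mpr h) hfac2
      nlinarith [this, hcross]
    · exact h
    · exfalso
      have := mul_pos (sub_pos.mpr h) hfac2
      nlinarith [this, hcross]
  intro i
  have : ∑ j, a j = (N : ℝ) * a i := by
    rw [Finset.sum_congr rfl (fun j _ => heq j i)]
    simp [mul_comm]
  have hNne : (N : ℝ) ≠ 0 := Nat.cast_ne_zero.mpr hNpos.ne'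
  have := this.symm.trans hsum
  exact mul_left_cancel₀ hNne this
end

section
/- Let N ≥ 2, β > 0, λ ≥ 0, ρ ∈ (0,1/2), ρ₀ = 1-2ρ. Let g_i, h_i : [0,∞) → ℝ satisfy g_i(t) = g_i(0) e^{-Nβρ₀ t} and, for all i, j, the differential inequality (h_i - h_j)'(t) ≤ -Nβ(h_i - h_j)(t) + (λNρ₀/2)(g_i(t)² - g_j(t)²). Then for ρ ≠ 1/4: h_i(t) - h_j(t) ≤ (h_i(0) - h_j(0)) e^{-Nβt} + [(1-2ρ)λ(g_i(0)² - g_j(0)²)/(2β(4ρ-1))] (e^{-(2-4ρ)Nβt} - e^{-Nβt}), and in particular lim_{t→∞}(h_i(t) - h_j(t)) ≤ 0 if additionally the symmetric inequality holds with i and j swapped, then h_i(t) - h_j(t) → 0 as t → ∞. -/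
/-!
Writing `u = h_i - h_j` and `b = (2 - 4ρ)Nβ`, the decay of `g_i, g_j` turns the hypothesis into
`u' ≤ -a u + c e^{-b t}` with `a = Nβ`. The integrating factor `e^{a t}` makes the difference
between `u` and the explicit solution of `u' = -a u + c e^{-b t}` antitone, which gives the bound.
With the symmetric inequality the same argument bounds `-u`; to get limits without treating the
resonant case `a = b` apart, the forcing term is first dominated by `|c| e^{-min b (a/2) t}`.
-/

open Filter Real Topology

theorem le_mul_exp_of_hasDerivAt_le_neg_mul {φ φ' : ℝ → ℝ} {a : ℝ}
    (hφ : ∀ t ≥ (0:ℝ), HasDerivAt φ (φ' t) t) (hle : ∀ t ≥ (0:ℝ), φ' t ≤ -a * φ t) :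
    ∀ t ≥ (0:ℝ), φ t ≤ φ 0 * exp (-a * t) := by
  have hψ : ∀ t ≥ (0:ℝ), HasDerivAt (fun s => exp (a * s) * φ s)
      (exp (a * t) * (a * φ t + φ' t)) t := by
    intro t ht
    refine ((((hasDerivAt_id t).const_mul a).exp).mul (hφ t ht)).congr_deriv ?_
    simp only [id_eq]
    ring
  have hanti : AntitoneOn (fun s => exp (a * s) * φ s) (Set.Ici 0) := by
    refine antitoneOn_of_hasDerivWithinAt_nonpos (convex_Ici 0)
      (fun t ht => (hψ t ht).continuousAt.continuousWithinAt)
      (fun t ht => (hψ t (interior_subset ht)).hasDerivWithinAt) fun t ht => ?_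
    have := hle t (interior_subset ht)
    exact mul_nonpos_of_nonneg_of_nonpos (exp_pos _).le (by linarith)
  intro t ht
  have h := hanti Set.self_mem_Ici ht ht
  simp only [mul_zero, exp_zero, one_mul] at h
  calc φ t = exp (-a * t) * (exp (a * t) * φ t) := by
        rw [← mul_assoc, ← exp_add, neg_mul, neg_add_cancel, exp_zero, one_mul]
    _ ≤ exp (-a * t) * φ 0 := by gcongr
    _ = φ 0 * exp (-a * t) := mul_comm _ _

/-- The solution of `u' = -a u + c e^{-b t}`, `u 0 = u₀`, for `a ≠ b`. -/
noncomputable def expForcedSolution (a b c u₀ t : ℝ) : ℝ :=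
  u₀ * exp (-a * t) + c / (a - b) * (exp (-b * t) - exp (-a * t))

section expForcedSolution

variable {a b : ℝ} (c u₀ : ℝ)

theorem expForcedSolution_zero : expForcedSolution a b c u₀ 0 = u₀ := by
  simp [expForcedSolution]

theorem hasDerivAt_expForcedSolution (hab : a ≠ b) (t : ℝ) :
    HasDerivAt (expForcedSolution a b c u₀)
      (-a * expForcedSolution a b c u₀ t + c * exp (-b * t)) t := by
  have hexp : ∀ k : ℝ, HasDerivAt (fun s => exp (k * s)) (k * exp (k * t)) t := fun k => by
    simpa [mul_comm] using ((hasDerivAt_id t).const_mul k).exp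
  refine (((hexp (-a)).const_mul u₀).add
    (((hexp (-b)).sub (hexp (-a))).const_mul (c / (a - b)))).congr_deriv ?_
  have : a - b ≠ 0 := sub_ne_zero.mpr hab
  simp only [expForcedSolution]
  field_simp
  ring

theorem tendsto_expForcedSolution (ha : 0 < a) (hb : 0 < b) :
    Tendsto (expForcedSolution a b c u₀) atTop (𝓝 0) := by
  have hexp : ∀ {k : ℝ}, 0 < k → Tendsto (fun t => exp (-k * t)) atTop (𝓝 0) := fun hk =>
    tendsto_exp_atBot.comp (tendsto_id.const_mul_atTop_of_neg (neg_lt_zero.mpr hk))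
  unfold expForcedSolution
  simpa only [mul_zero, sub_self, add_zero] using
    ((hexp ha).const_mul u₀).add (((hexp hb).sub (hexp ha)).const_mul (c / (a - b)))

theorem le_expForcedSolution (hab : a ≠ b) {u u' : ℝ → ℝ}
    (hu : ∀ t ≥ (0:ℝ), HasDerivAt u (u' t) t)
    (hle : ∀ t ≥ (0:ℝ), u' t ≤ -a * u t + c * exp (-b * t)) :
    ∀ t ≥ (0:ℝ), u t ≤ expForcedSolution a b c (u 0) t := by
  intro t ht
  have h := le_mul_exp_of_hasDerivAt_le_neg_mul (a := a)
    (fun s hs => (hu s hs).sub (hasDerivAt_expForcedSolution c (u 0) hab s))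
    (fun s hs => by simp only [Pi.sub_apply]; linarith [hle s hs]) t ht
  simp only [Pi.sub_apply, expForcedSolution_zero, sub_self, zero_mul] at h
  linarith

end expForcedSolution

theorem exists_tendsto_zero_ge_of_hasDerivAt_le {a b c : ℝ} (ha : 0 < a) (hb : 0 < b)
    {u u' : ℝ → ℝ} (hu : ∀ t ≥ (0:ℝ), HasDerivAt u (u' t) t)
    (hle : ∀ t ≥ (0:ℝ), u' t ≤ -a * u t + c * exp (-b * t)) :
    ∃ v : ℝ → ℝ, Tendsto v atTop (𝓝 0) ∧ ∀ t ≥ (0:ℝ), u t ≤ v t := by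
  set b' := min b (a / 2)
  have hb' : 0 < b' := lt_min hb (half_pos ha)
  have hab' : a ≠ b' := (lt_of_le_of_lt (min_le_right _ _) (half_lt_self ha)).ne'
  refine ⟨expForcedSolution a b' |c| (u 0), tendsto_expForcedSolution _ _ ha hb',
    le_expForcedSolution |c| hab' hu fun t ht => ?_⟩
  have hdecay : exp (-b * t) ≤ exp (-b' * t) :=
    exp_le_exp.mpr (by nlinarith [min_le_left b (a / 2)])
  calc u' t ≤ -a * u t + c * exp (-b * t) := hle t ht
    _ ≤ -a * u t + |c| * exp (-b' * t) :=
      (add_le_add_iff_left _).mpr <|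
        (mul_le_mul_of_nonneg_right (le_abs_self c) (exp_pos _).le).trans
          (mul_le_mul_of_nonneg_left hdecay (abs_nonneg c))

theorem sq_sub_sq_of_eq_mul_exp {f g : ℝ → ℝ} {k : ℝ} (hf : ∀ t, f t = f 0 * exp (k * t))
    (hg : ∀ t, g t = g 0 * exp (k * t)) (t : ℝ) :
    f t ^ 2 - g t ^ 2 = (f 0 ^ 2 - g 0 ^ 2) * exp (2 * k * t) := by
  rw [hf t, hg t, show 2 * k * t = k * t + k * t by ring, exp_add]
  ring

theorem stmt_15_general
    (N : ℕ) (hN : 2 ≤ N) (β lam ρ ρ0 : ℝ) (hβ : 0 < β)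
    (hρ : ρ ∈ Set.Ioo (0:ℝ) (1/2)) (hρ0 : ρ0 = 1 - 2*ρ)
    (gi gj hi hj D : ℝ → ℝ)
    (hgi : ∀ t, gi t = gi 0 * Real.exp (-(N:ℝ) * β * ρ0 * t))
    (hgj : ∀ t, gj t = gj 0 * Real.exp (-(N:ℝ) * β * ρ0 * t))
    (hderiv : ∀ t ≥ (0:ℝ), HasDerivAt (fun s => hi s - hj s) (D t) t)
    (hineq : ∀ t ≥ (0:ℝ), D t ≤ -(N:ℝ) * β * (hi t - hj t)
      + (lam * (N:ℝ) * ρ0 / 2) * ((gi t)^2 - (gj t)^2)) :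
    (ρ ≠ 1/4 → ∀ t ≥ (0:ℝ),
      hi t - hj t ≤ (hi 0 - hj 0) * Real.exp (-(N:ℝ) * β * t)
        + ((1 - 2*ρ) * lam * ((gi 0)^2 - (gj 0)^2) / (2 * β * (4*ρ - 1)))
          * (Real.exp (-(2 - 4*ρ) * (N:ℝ) * β * t) - Real.exp (-(N:ℝ) * β * t))) ∧
    ((∀ t ≥ (0:ℝ), -D t ≤ -(N:ℝ) * β * (hj t - hi t)
        + (lam * (N:ℝ) * ρ0 / 2) * ((gj t)^2 - (gi t)^2)) →
      Tendsto (fun t => hi t - hj t) atTop (nhds 0)) := by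
  subst hρ0
  have hN0 : (0:ℝ) < N := by exact_mod_cast zero_lt_two.trans_le hN
  have ha : 0 < (N:ℝ) * β := mul_pos hN0 hβ
  have hb : 0 < (2 - 4 * ρ) * N * β := by nlinarith [hρ.2]
  obtain ⟨c, hc⟩ : ∃ c, c = lam * N * (1 - 2 * ρ) / 2 * (gi 0 ^ 2 - gj 0 ^ 2) := ⟨_, rfl⟩
  have hforce : ∀ t, lam * N * (1 - 2 * ρ) / 2 * (gi t ^ 2 - gj t ^ 2)
      = c * exp (-((2 - 4 * ρ) * N * β) * t) := fun t => by
    rw [sq_sub_sq_of_eq_mul_exp hgi hgj t, hc]; ring_nf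
  have hup : ∀ t ≥ (0:ℝ), D t ≤ -(N * β) * (hi t - hj t)
      + c * exp (-((2 - 4 * ρ) * N * β) * t) := fun t ht => by
    linarith [hineq t ht, hforce t]
  constructor
  · intro hne t ht
    have hab : (N:ℝ) * β ≠ (2 - 4 * ρ) * N * β := fun h => hne (by nlinarith)
    have hcoef : c / (N * β - (2 - 4 * ρ) * N * β)
        = (1 - 2 * ρ) * lam * (gi 0 ^ 2 - gj 0 ^ 2) / (2 * β * (4 * ρ - 1)) := by
      have : 4 * ρ - 1 ≠ 0 := fun h => hne (by linarith)
      rw [hc]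
      field_simp
      ring
    calc hi t - hj t ≤ expForcedSolution _ _ c (hi 0 - hj 0) t :=
          le_expForcedSolution c hab hderiv hup t ht
      _ = _ := by
        rw [expForcedSolution, hcoef]
        ring_nf
  · intro hsym
    have hderiv' : ∀ t ≥ (0:ℝ), HasDerivAt (fun s => hj s - hi s) (-D t) t := fun t ht => by
      simpa only [Pi.neg_def, neg_sub] using (hderiv t ht).neg
    have hdown : ∀ t ≥ (0:ℝ), -D t ≤ -(N * β) * (hj t - hi t)
        + -c * exp (-((2 - 4 * ρ) * N * β) * t) := fun t ht => by
      linarith [hsym t ht, hforce t]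
    obtain ⟨v, hv, huv⟩ := exists_tendsto_zero_ge_of_hasDerivAt_le ha hb hderiv hup
    obtain ⟨w, hw, hwu⟩ := exists_tendsto_zero_ge_of_hasDerivAt_le ha hb hderiv' hdown
    refine tendsto_of_tendsto_of_tendsto_of_le_of_le' (by simpa using hw.neg) hv ?_ ?_ <;>
      filter_upwards [eventually_ge_atTop 0] with t ht
    · linarith [hwu t ht]
    · exact huv t ht

/-- Grönwall-type comparison used in the convergence proof for ρ₊ = ρ₋ = ρ:
the explicit bound on h_i - h_j, and convergence of h_i - h_j to 0 when the
symmetric differential inequality also holds. -/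
theorem stmt_15
    (N : ℕ) (hN : 2 ≤ N) (β lam ρ ρ0 : ℝ) (hβ : 0 < β) (hlam : 0 ≤ lam)
    (hρ : ρ ∈ Set.Ioo (0:ℝ) (1/2)) (hρ0 : ρ0 = 1 - 2*ρ)
    (gi gj hi hj D : ℝ → ℝ)
    (hgi : ∀ t, gi t = gi 0 * Real.exp (-(N:ℝ) * β * ρ0 * t))
    (hgj : ∀ t, gj t = gj 0 * Real.exp (-(N:ℝ) * β * ρ0 * t))
    (hderiv : ∀ t ≥ (0:ℝ), HasDerivAt (fun s => hi s - hj s) (D t) t)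
    (hineq : ∀ t ≥ (0:ℝ), D t ≤ -(N:ℝ) * β * (hi t - hj t)
      + (lam * (N:ℝ) * ρ0 / 2) * ((gi t)^2 - (gj t)^2)) :
    (ρ ≠ 1/4 → ∀ t ≥ (0:ℝ),
      hi t - hj t ≤ (hi 0 - hj 0) * Real.exp (-(N:ℝ) * β * t)
        + ((1 - 2*ρ) * lam * ((gi 0)^2 - (gj 0)^2) / (2 * β * (4*ρ - 1)))
          * (Real.exp (-(2 - 4*ρ) * (N:ℝ) * β * t) - Real.exp (-(N:ℝ) * β * t))) ∧
    ((∀ t ≥ (0:ℝ), -D t ≤ -(N:ℝ) * β * (hj t - hi t)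
        + (lam * (N:ℝ) * ρ0 / 2) * ((gj t)^2 - (gi t)^2)) →
      Tendsto (fun t => hi t - hj t) atTop (nhds 0)) :=
  stmt_15_general N hN β lam ρ ρ0 hβ hρ hρ0 gi gj hi hj D hgi hgj hderiv hineq
end

section
/- Let β ≥ 0, λ ≥ 0, ρ₊, ρ₋ ∈ (0,1), ρ₀ = 1-ρ₊-ρ₋ > 0, and consider the 2×2 matrix M = [[-(β+λρ₋)(ρ₀+ρ₊), -λρ₀ρ₊ - (β+λρ₋)ρ₊], [-λρ₀ρ₋ - (β+λρ₊)ρ₋, -(β+λρ₊)(ρ₀+ρ₋)]]. Then trace(M) = -((1-ρ₋)(β+λρ₋) + (1-ρ₊)(β+λρ₊)) and det(M) = β²ρ₀ + βλ(ρ₀(1-ρ₀) - 2ρ₀ρ₊ρ₋). Moreover, if β > 0 then det(M) > 0 and trace(M) < 0, so both eigenvalues of M have strictly negative real part; if β = 0 and λ > 0 then det(M) = 0 and trace(M) < 0. -/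
open Polynomial in
lemma charpoly_fin_two' {R : Type*} [CommRing R] (A : Matrix (Fin 2) (Fin 2) R) :
    A.charpoly = X^2 - C A.trace * X + C A.det := by
  rw [Matrix.charpoly, Matrix.det_fin_two, Matrix.trace_fin_two, Matrix.det_fin_two]
  simp [Matrix.charmatrix_apply_eq, Matrix.charmatrix_apply_ne]
  ring

lemma quad_root_neg_re (t d : ℝ) (ht : t < 0) (hd : 0 < d) (z : ℂ)
    (hz : z^2 - (t:ℂ) * z + d = 0) : z.re < 0 := by
  have hre := congrArg Complex.re hz
  have him := congrArg Complex.im hz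
  simp [Complex.add_re, Complex.sub_re, Complex.mul_re, Complex.mul_im, pow_two] at hre him
  rcases mul_eq_zero.mp (by linarith [him] : z.im * (2 * z.re - t) = 0) with h | h
  · nlinarith [sq_nonneg z.re, sq_nonneg z.im]
  · nlinarith

/-- Trace/determinant computation for the Jacobian block of the linearization
around the homogeneous equilibrium, and the resulting sign conditions:
for β > 0 all eigenvalues have negative real part; for β = 0, λ > 0 the
determinant vanishes while the trace is negative. -/
theorem stmt_16
    (β lam ρp ρm ρ0 : ℝ) (hβ : 0 ≤ β) (hlam : 0 ≤ lam)
    (hρp : ρp ∈ Set.Ioo (0:ℝ) 1) (hρm : ρm ∈ Set.Ioo (0:ℝ) 1)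
    (hρ0 : ρ0 = 1 - ρp - ρm) (hρ0pos : 0 < ρ0)
    (M : Matrix (Fin 2) (Fin 2) ℝ)
    (hM : M = !![-(β + lam*ρm) * (ρ0 + ρp), -lam*ρ0*ρp - (β + lam*ρm)*ρp;
                 -lam*ρ0*ρm - (β + lam*ρp)*ρm, -(β + lam*ρp) * (ρ0 + ρm)]) :
    M.trace = -((1 - ρm) * (β + lam*ρm) + (1 - ρp) * (β + lam*ρp)) ∧
    M.det = β^2 * ρ0 + β * lam * (ρ0 * (1 - ρ0) - 2 * ρ0 * ρp * ρm) ∧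
    (0 < β → 0 < M.det ∧ M.trace < 0 ∧
      ∀ z : ℂ, (M.map (Complex.ofReal)).charpoly.IsRoot z → z.re < 0) ∧
    (β = 0 → 0 < lam → M.det = 0 ∧ M.trace < 0) := by
  obtain ⟨hp0, hp1⟩ := hρp
  obtain ⟨hm0, hm1⟩ := hρm
  have htr : M.trace = -((1 - ρm) * (β + lam*ρm) + (1 - ρp) * (β + lam*ρp)) := by
    subst hM hρ0
    rw [Matrix.trace_fin_two]
    simp [Matrix.cons_val_zero, Matrix.cons_val_one]
    ring
  have hdet : M.det = β^2 * ρ0 + β * lam * (ρ0 * (1 - ρ0) - 2 * ρ0 * ρp * ρm) := by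
    subst hM hρ0
    rw [Matrix.det_fin_two_of]
    ring
  have htrneg : 0 < β ∨ 0 < lam → M.trace < 0 := by
    intro h
    have hm' : 0 < β + lam * ρm := by
      rcases h with h | h
      · exact add_pos_of_pos_of_nonneg h (mul_nonneg hlam hm0.le)
      · exact add_pos_of_nonneg_of_pos hβ (mul_pos h hm0)
    have hp' : 0 < β + lam * ρp := by
      rcases h with h | h
      · exact add_pos_of_pos_of_nonneg h (mul_nonneg hlam hp0.le)
      · exact add_pos_of_nonneg_of_pos hβ (mul_pos h hp0)
    have h1 := mul_pos (show (0:ℝ) < 1 - ρm by linarith) hm'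
    have h2 := mul_pos (show (0:ℝ) < 1 - ρp by linarith) hp'
    rw [htr]; linarith
  refine ⟨htr, hdet, fun hβpos => ?_, fun hβ0 hlampos => ?_⟩
  · have hdetpos : 0 < M.det := by
      have e : β^2 * ρ0 + β * lam * (ρ0 * (1 - ρ0) - 2 * ρ0 * ρp * ρm)
          = β^2 * ρ0 + β * lam * (ρ0 * (ρp * (1 - ρm) + ρm * (1 - ρp))) := by
        rw [hρ0]; ring
      rw [hdet, e]
      have h1 : 0 ≤ β * lam * (ρ0 * (ρp * (1 - ρm) + ρm * (1 - ρp))) := by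
        apply mul_nonneg (mul_nonneg hβ hlam)
        apply mul_nonneg hρ0pos.le
        have := mul_nonneg hp0.le (show (0:ℝ) ≤ 1 - ρm by linarith)
        have := mul_nonneg hm0.le (show (0:ℝ) ≤ 1 - ρp by linarith)
        linarith
      nlinarith [mul_pos (mul_pos hβpos hβpos) hρ0pos]
    have htrneg' := htrneg (Or.inl hβpos)
    refine ⟨hdetpos, htrneg', fun z hz => ?_⟩
    have h2 : z^2 - (M.trace : ℂ) * z + (M.det : ℂ) = 0 := by
      have hcp := charpoly_fin_two' (M.map (Complex.ofReal))
      have htr' : (M.map Complex.ofReal).trace = (M.trace : ℂ) := by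
        simp [Matrix.trace_fin_two, Matrix.map_apply]
      have hdet' : (M.map Complex.ofReal).det = (M.det : ℂ) := by
        rw [show M.map Complex.ofReal = Complex.ofRealHom.mapMatrix M from rfl,
          ← RingHom.map_det]
        rfl
      rw [Polynomial.IsRoot, hcp, htr', hdet'] at hz
      simpa using hz
    exact quad_root_neg_re _ _ htrneg' hdetpos z h2
  · refine ⟨by rw [hdet, hβ0]; ring, htrneg (Or.inr hlampos)⟩
end

section
/- Let β = 0, λ > 0, N ≥ 1, ρ₀ ∈ (0,1), and let {f̂_{i,±}}_{1≤i≤N} with f̂_{i,±} ≥ 0, f̂_{i,+} + f̂_{i,-} ≤ 1, be an equilibrium: f̂_{i,0} Σ_{j=1}^N f̂_{j,+} f̂_{j,-} = N ρ₀ f̂_{i,+} f̂_{i,-} for all i, where f̂_{i,0} = 1 - f̂_{i,+} - f̂_{i,-}. If Σ_{j=1}^N f̂_{j,+} f̂_{j,-} > 0, then for every index i with f̂_{i,0} = 0 one has f̂_{i,+} = 1 or f̂_{i,-} = 1; and for every index i with f̂_{i,0} > 0, setting Δ_i = (f̂_{i,+} - f̂_{i,-})/2 and α = (1/(Nρ₀))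 Σ_j f̂_{j,+} f̂_{j,-}, one has f̂_{i,±} = √(α² + α + Δ_i²) - α ± Δ_i. -/
open Finset

/-!
Dividing the equilibrium equation by `N ρ₀` gives `f̂_{i,0} α = f̂_{i,+} f̂_{i,-}` at every site.
If `f̂_{i,0} = 0` this forces one of the two densities to vanish. Otherwise, writing
`m = (f̂_{i,+} + f̂_{i,-})/2` and `Δ = (f̂_{i,+} - f̂_{i,-})/2`, so that `f̂_{i,+} f̂_{i,-} = m² - Δ²`
and `f̂_{i,0} = 1 - 2m`, the relation reads `α² + α + Δ² = (m + α)²`; since `m + α ≥ 0` this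
gives `m = √(α² + α + Δ²) - α`, and `f̂_{i,±} = m ± Δ`.
-/

lemma eq_one_or_eq_one_of_add_eq_one_of_mul_eq_zero {p m : ℝ} (hsum : p + m = 1)
    (hmul : p * m = 0) : p = 1 ∨ m = 1 := by
  rcases mul_eq_zero.mp hmul with hp | hm
  · right; linarith
  · left; linarith

lemma sqrt_sq_add_self_add_sq_half_sub_eq {p m α : ℝ} (hp : 0 ≤ p) (hm : 0 ≤ m) (hα : 0 ≤ α)
    (h : (1 - p - m) * α = p * m) :
    √(α ^ 2 + α + ((p - m) / 2) ^ 2) = (p + m) / 2 + α := by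
  have hsq : α ^ 2 + α + ((p - m) / 2) ^ 2 = ((p + m) / 2 + α) ^ 2 := by
    linear_combination h
  rw [hsq, Real.sqrt_sq (by positivity)]

theorem stmt_18_general
    (N : ℕ) (ρ0 : ℝ) (hρ0 : ρ0 ∈ Set.Ioo (0:ℝ) 1)
    (fp fm f0 : Fin N → ℝ)
    (hnn : ∀ i, 0 ≤ fp i ∧ 0 ≤ fm i)
    (hf0 : ∀ i, f0 i = 1 - fp i - fm i)
    (heq : ∀ i, f0 i * ∑ j, fp j * fm j = (N:ℝ) * ρ0 * (fp i * fm i))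
    (α : ℝ) (hα : α = (1 / ((N:ℝ) * ρ0)) * ∑ j, fp j * fm j) :
    ∀ i : Fin N,
      (f0 i = 0 → fp i = 1 ∨ fm i = 1) ∧
      (0 < f0 i →
        fp i = Real.sqrt (α^2 + α + ((fp i - fm i)/2)^2) - α + (fp i - fm i)/2 ∧
        fm i = Real.sqrt (α^2 + α + ((fp i - fm i)/2)^2) - α - (fp i - fm i)/2) := by
  intro i
  have hNρ : 0 < (N:ℝ) * ρ0 := mul_pos (Nat.cast_pos.2 i.pos) hρ0.1
  have hrel : f0 i * α = fp i * fm i := by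
    rw [hα, ← mul_right_inj' hNρ.ne', ← heq i, mul_left_comm, ← mul_assoc (_ * _), mul_one_div_cancel hNρ.ne', one_mul]
  have hα0 : 0 ≤ α := hα ▸ mul_nonneg (one_div_nonneg.2 hNρ.le)
    (sum_nonneg fun j _ => mul_nonneg (hnn j).1 (hnn j).2)
  refine ⟨fun h0 => ?_, fun _ => ?_⟩
  · exact eq_one_or_eq_one_of_add_eq_one_of_mul_eq_zero (by linarith [hf0 i])
      (by rw [← hrel, h0, zero_mul])
  · rw [hf0 i] at hrel
    have hsqrt := sqrt_sq_add_self_add_sq_half_sub_eq (hnn i).1 (hnn i).2 hα0 hrel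
    constructor <;> rw [hsqrt] <;> ring

/-- Non-segregated branch of the equilibrium dichotomy for the β = 0 system:
full neighborhoods are monochromatic, and neighborhoods with vacancies follow
the rigid-mixing formula. -/
theorem stmt_18
    (N : ℕ) (hN : 1 ≤ N) (lam ρ0 : ℝ) (hlam : 0 < lam) (hρ0 : ρ0 ∈ Set.Ioo (0:ℝ) 1)
    (fp fm f0 : Fin N → ℝ)
    (hnn : ∀ i, 0 ≤ fp i ∧ 0 ≤ fm i) (hle : ∀ i, fp i + fm i ≤ 1)
    (hf0 : ∀ i, f0 i = 1 - fp i - fm i)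
    (heq : ∀ i, f0 i * ∑ j, fp j * fm j = (N:ℝ) * ρ0 * (fp i * fm i))
    (hpos : 0 < ∑ j, fp j * fm j)
    (α : ℝ) (hα : α = (1 / ((N:ℝ) * ρ0)) * ∑ j, fp j * fm j) :
    ∀ i : Fin N,
      (f0 i = 0 → fp i = 1 ∨ fm i = 1) ∧
      (0 < f0 i →
        fp i = Real.sqrt (α^2 + α + ((fp i - fm i)/2)^2) - α + (fp i - fm i)/2 ∧
        fm i = Real.sqrt (α^2 + α + ((fp i - fm i)/2)^2) - α - (fp i - fm i)/2) :=
  stmt_18_general N ρ0 hρ0 fp fm f0 hnn hf0 heq α hα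
end
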